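/- Let X and Y be metric spaces and let E and F be normed spaces. Every standard isometry T : Lip(X,E) → Lip(Y,F) is a surjective linear isometry of Lip(X,E) onto Lip(Y,F); moreover, the associated map J : Y → Iso(E,F) is Lipschitz when Iso(E,F) is endowed with the operator norm metric. -/

import Mathlib

open Function Metric Set
open scoped NNReal

/-- A function between a metric space and a normed space is bounded and Lipschitz. -/
def IsBddLip {X E : Type*} [MetricSpace X] [NormedAddCommGroup E] (f : X → E) : Prop :=
  (∃ K : ℝ, ∀ x y : X, ‖f x - f y‖ ≤ K * dist x y) ∧ ∃ C : ℝ, ∀ x : X, ‖f x‖ ≤ C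

/-- The Lipschitz constant `L(f)` of a function. -/
noncomputable def lipConst {X E : Type*} [MetricSpace X] [NormedAddCommGroup E] (f : X → E) : ℝ :=
  sInf {K : ℝ | 0 ≤ K ∧ ∀ x y : X, ‖f x - f y‖ ≤ K * dist x y}

/-- The norm `max {L(f), ‖f‖∞}` of the space `Lip(X,E)`. -/
noncomputable def lipNorm {X E : Type*} [MetricSpace X] [NormedAddCommGroup E] (f : X → E) : ℝ :=
  max (lipConst f) (⨆ x : X, ‖f x‖)

/-- `T` is a surjective linear isometry from `Lip(X,E)` onto `Lip(Y,F)` (encoded on plain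
functions, with all requirements imposed on bounded Lipschitz functions). -/
structure IsLipIso (𝕜 : Type*) {X Y E F : Type*} [RCLike 𝕜] [MetricSpace X] [MetricSpace Y]
    [NormedAddCommGroup E] [NormedSpace 𝕜 E] [NormedAddCommGroup F] [NormedSpace 𝕜 F]
    (T : (X → E) → (Y → F)) : Prop where
  mapsLip : ∀ f, IsBddLip f → IsBddLip (T f)
  map_add : ∀ f g, IsBddLip f → IsBddLip g → T (f + g) = T f + T g
  map_smul : ∀ (c : 𝕜) (f), IsBddLip f → T (c • f) = c • T f
  norm_map : ∀ f, IsBddLip f → lipNorm (T f) = lipNorm f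
  surjOn : ∀ g, IsBddLip g → ∃ f, IsBddLip f ∧ T f = g

/-- `Δ : Lip(X,E) → Lip(Y,F)` is a `2`-local isometry. -/
def Is2LocalLipIso (𝕜 : Type*) {X Y E F : Type*} [RCLike 𝕜] [MetricSpace X] [MetricSpace Y]
    [NormedAddCommGroup E] [NormedSpace 𝕜 E] [NormedAddCommGroup F] [NormedSpace 𝕜 F]
    (Δ : (X → E) → (Y → F)) : Prop :=
  ∀ f g : X → E, IsBddLip f → IsBddLip g →
    ∃ T : (X → E) → (Y → F), IsLipIso 𝕜 T ∧ Δ f = T f ∧ Δ g = T g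

/-- `φ` preserves distances less than `2`. -/
def PreservesDistLT2 {Y X : Type*} [MetricSpace Y] [MetricSpace X] (φ : Y → X) : Prop :=
  ∀ y y' : Y, dist y y' < 2 → dist (φ y) (φ y') = dist y y'

/-- Two points lie in the same `2`-component: they are joined by a finite chain of points with
consecutive distances less than `2`. -/
def SameTwoComponent {Y : Type*} [MetricSpace Y] : Y → Y → Prop :=
  Relation.ReflTransGen fun a b => dist a b < 2

/-- `T` is a standard isometry from `Lip(X,E)` to `Lip(Y,F)`: there are `φ ∈ Iso_{<2}(Y,X)` and
`J : Y → Iso(E,F)` constant on `2`-components with `T f y = J y (f (φ y))`. -/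
def IsStandardLipIso (𝕜 : Type*) {X Y E F : Type*} [RCLike 𝕜] [MetricSpace X] [MetricSpace Y]
    [NormedAddCommGroup E] [NormedSpace 𝕜 E] [NormedAddCommGroup F] [NormedSpace 𝕜 F]
    (T : (X → E) → (Y → F)) : Prop :=
  ∃ (φ : Y → X) (ψ : X → Y) (J : Y → E ≃ₗᵢ[𝕜] F),
    Function.LeftInverse ψ φ ∧ Function.RightInverse ψ φ ∧
    PreservesDistLT2 φ ∧ PreservesDistLT2 ψ ∧
    (∀ y y' : Y, SameTwoComponent y y' → J y = J y') ∧
    ∀ f, IsBddLip f → ∀ y : Y, T f y = J y (f (φ y))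

/-- `Δ : Lip(X,E) → Lip(Y,F)` is a `2`-local standard isometry. -/
def Is2LocalStdLipIso (𝕜 : Type*) {X Y E F : Type*} [RCLike 𝕜] [MetricSpace X] [MetricSpace Y]
    [NormedAddCommGroup E] [NormedSpace 𝕜 E] [NormedAddCommGroup F] [NormedSpace 𝕜 F]
    (Δ : (X → E) → (Y → F)) : Prop :=
  ∀ f g : X → E, IsBddLip f → IsBddLip g →
    ∃ T : (X → E) → (Y → F), IsStandardLipIso 𝕜 T ∧ Δ f = T f ∧ Δ g = T g

/-- A normed space is smooth: every norm-one vector has a unique norm-one supporting functional. -/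
def IsSmooth (𝕜 : Type*) (E : Type*) [RCLike 𝕜] [NormedAddCommGroup E] [NormedSpace 𝕜 E] :
    Prop :=
  ∀ e : E, ‖e‖ = 1 → ∃! u : StrongDual 𝕜 E, ‖u‖ = 1 ∧ u e = 1

/-- A normed space is reflexive: the canonical inclusion in the double dual is onto. -/
def IsReflexiveSp (𝕜 : Type*) (E : Type*) [RCLike 𝕜] [NormedAddCommGroup E] [NormedSpace 𝕜 E] :
    Prop :=
  Function.Surjective (NormedSpace.inclusionInDoubleDual 𝕜 E)

/-- `E` is `2`-iso-reflexive: every `2`-local isometry on `E` is linear and surjective. -/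
def TwoIsoReflexive (𝕜 : Type*) (E : Type*) [RCLike 𝕜] [NormedAddCommGroup E] [NormedSpace 𝕜 E] :
    Prop :=
  ∀ Δ : E → E, (∀ a b : E, ∃ T : E ≃ₗᵢ[𝕜] E, Δ a = T a ∧ Δ b = T b) →
    (∀ a b : E, Δ (a + b) = Δ a + Δ b) ∧ (∀ (c : 𝕜) (a : E), Δ (c • a) = c • Δ a) ∧
      Function.Surjective Δ

/-- The set `A_{x,u*,f} = {(y,v*) ∈ Y × B_{F*} : v*(Δ(f)(y)) = u*(f(x))}`. -/
def setA (𝕜 : Type*) {X Y E F : Type*} [RCLike 𝕜] [MetricSpace X] [MetricSpace Y]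
    [NormedAddCommGroup E] [NormedSpace 𝕜 E] [NormedAddCommGroup F] [NormedSpace 𝕜 F]
    (Δ : (X → E) → (Y → F)) (x : X) (u : StrongDual 𝕜 E) (f : X → E) :
    Set (Y × StrongDual 𝕜 F) :=
  {p | ‖p.2‖ ≤ 1 ∧ p.2 (Δ f p.1) = u (f x)}

/-- The set `A_{x,u*} = ⋂_{f ∈ Lip(X,E)} A_{x,u*,f}`. -/
def setAInter (𝕜 : Type*) {X Y E F : Type*} [RCLike 𝕜] [MetricSpace X] [MetricSpace Y]
    [NormedAddCommGroup E] [NormedSpace 𝕜 E] [NormedAddCommGroup F] [NormedSpace 𝕜 F]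
    (Δ : (X → E) → (Y → F)) (x : X) (u : StrongDual 𝕜 E) :
    Set (Y × StrongDual 𝕜 F) :=
  ⋂ f ∈ {f : X → E | IsBddLip f}, setA 𝕜 Δ x u f

/-! Below distance `2` the twisted composition `y ↦ J y (f (φ y))` has `J` constant and `φ`
isometric, so its increments are controlled by `L(f)`; at distance `≥ 2` the crude bound
`‖a - b‖ ≤ 2 ‖f‖∞ ≤ ‖f‖∞ · d` suffices. Hence `T` does not increase the Lipschitz norm, and
neither does the analogous map built from `ψ = φ⁻¹` and `J⁻¹`, which is its inverse. The same
dichotomy shows that `J` is `1`-Lipschitz for the operator norm. -/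

section LipNorm

variable {X E : Type*} [MetricSpace X] [NormedAddCommGroup E]

lemma IsBddLip.add {f g : X → E} (hf : IsBddLip f) (hg : IsBddLip g) : IsBddLip (f + g) := by
  obtain ⟨⟨K, hK⟩, C, hC⟩ := hf
  obtain ⟨⟨K', hK'⟩, C', hC'⟩ := hg
  refine ⟨⟨K + K', fun x y => ?_⟩, C + C', fun x => ?_⟩
  · calc ‖(f + g) x - (f + g) y‖ = ‖(f x - f y) + (g x - g y)‖ := by
          rw [Pi.add_apply, Pi.add_apply, add_sub_add_comm]
      _ ≤ K * dist x y + K' * dist x y := (norm_add_le _ _).trans (add_le_add (hK x y) (hK' x y))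
      _ = (K + K') * dist x y := by ring
  · exact (norm_add_le _ _).trans (add_le_add (hC x) (hC' x))

lemma IsBddLip.smul {𝕜 : Type*} [NormedField 𝕜] [NormedSpace 𝕜 E] (c : 𝕜) {f : X → E}
    (hf : IsBddLip f) : IsBddLip (c • f) := by
  obtain ⟨⟨K, hK⟩, C, hC⟩ := hf
  refine ⟨⟨‖c‖ * K, fun x y => ?_⟩, ‖c‖ * C, fun x => ?_⟩
  · rw [Pi.smul_apply, Pi.smul_apply, ← smul_sub, norm_smul, mul_assoc]
    exact mul_le_mul_of_nonneg_left (hK x y) (norm_nonneg c)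
  · rw [Pi.smul_apply, norm_smul]
    exact mul_le_mul_of_nonneg_left (hC x) (norm_nonneg c)

lemma lipConst_le {f : X → E} {K : ℝ} (hK : 0 ≤ K) (hf : ∀ x y, ‖f x - f y‖ ≤ K * dist x y) :
    lipConst f ≤ K :=
  csInf_le ⟨0, fun _ hK => hK.1⟩ ⟨hK, hf⟩

lemma IsBddLip.norm_sub_le_lipConst_mul {f : X → E} (hf : IsBddLip f) (x y : X) :
    ‖f x - f y‖ ≤ lipConst f * dist x y := by
  obtain ⟨⟨K, hK⟩, -⟩ := hf
  rcases eq_or_ne x y with rfl | hxy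
  · simp
  have hd : 0 < dist x y := dist_pos.2 hxy
  rw [← div_le_iff₀ hd]
  refine le_csInf ⟨max K 0, le_max_right _ _, fun x y => (hK x y).trans ?_⟩ fun K' hK' => ?_
  · exact mul_le_mul_of_nonneg_right (le_max_left _ _) dist_nonneg
  · exact (div_le_iff₀ hd).2 (hK'.2 x y)

lemma IsBddLip.norm_le_lipNorm {f : X → E} (hf : IsBddLip f) (x : X) : ‖f x‖ ≤ lipNorm f := by
  obtain ⟨-, C, hC⟩ := hf
  exact (le_ciSup ⟨C, by rintro r ⟨z, rfl⟩; exact hC z⟩ x).trans (le_max_right _ _)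

lemma lipNorm_nonneg (f : X → E) : 0 ≤ lipNorm f :=
  (Real.iSup_nonneg fun x => norm_nonneg (f x)).trans (le_max_right _ _)

lemma IsBddLip.norm_sub_le_lipNorm_mul {f : X → E} (hf : IsBddLip f) (x y : X) :
    ‖f x - f y‖ ≤ lipNorm f * dist x y :=
  (hf.norm_sub_le_lipConst_mul x y).trans
    (mul_le_mul_of_nonneg_right (le_max_left _ _) dist_nonneg)

lemma lipNorm_le {f : X → E} {K : ℝ} (hK : 0 ≤ K) (hlip : ∀ x y, ‖f x - f y‖ ≤ K * dist x y)
    (hbd : ∀ x, ‖f x‖ ≤ K) : lipNorm f ≤ K :=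
  max_le (lipConst_le hK hlip) (Real.iSup_le hbd hK)

end LipNorm

lemma norm_sub_le_mul_of_two_le {G : Type*} [SeminormedAddCommGroup G] {a b : G} {M r : ℝ}
    (ha : ‖a‖ ≤ M) (hb : ‖b‖ ≤ M) (hr : 2 ≤ r) : ‖a - b‖ ≤ M * r := by
  have hM : 0 ≤ M := (norm_nonneg a).trans ha
  calc ‖a - b‖ ≤ M + M := (norm_sub_le a b).trans (add_le_add ha hb)
    _ ≤ M * r := by nlinarith

lemma norm_sub_le_dist_of_eq_of_dist_lt_two {Y G : Type*} [MetricSpace Y]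
    [SeminormedAddCommGroup G] {g : Y → G} (hg : ∀ y, ‖g y‖ ≤ 1)
    (hloc : ∀ y y', dist y y' < 2 → g y = g y') (y y' : Y) : ‖g y - g y'‖ ≤ dist y y' := by
  rcases lt_or_ge (dist y y') 2 with h | h
  · simp [hloc y y' h]
  · simpa using norm_sub_le_mul_of_two_le (hg y) (hg y') h

section TwistedComp

variable {𝕜 X Y E F : Type*} [Semiring 𝕜] [MetricSpace X] [MetricSpace Y]
  [NormedAddCommGroup E] [Module 𝕜 E] [NormedAddCommGroup F] [Module 𝕜 F]
  {φ : Y → X} {J : Y → E →ₗᵢ[𝕜] F} {f : X → E}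

lemma norm_twistedComp_sub_le (hφ : PreservesDistLT2 φ)
    (hJ : ∀ y y', dist y y' < 2 → J y = J y') (hf : IsBddLip f) (y y' : Y) :
    ‖J y (f (φ y)) - J y' (f (φ y'))‖ ≤ lipNorm f * dist y y' := by
  rcases lt_or_ge (dist y y') 2 with h | h
  · calc ‖J y (f (φ y)) - J y' (f (φ y'))‖ = ‖f (φ y) - f (φ y')‖ := by
          rw [hJ y y' h, ← map_sub, LinearIsometry.norm_map]
      _ ≤ lipNorm f * dist y y' := by
          rw [← hφ y y' h]; exact hf.norm_sub_le_lipNorm_mul _ _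
  · refine norm_sub_le_mul_of_two_le ?_ ?_ h <;>
      exact ((J _).norm_map _).trans_le (hf.norm_le_lipNorm _)

lemma isBddLip_twistedComp_and_lipNorm_le (hφ : PreservesDistLT2 φ)
    (hJ : ∀ y y', dist y y' < 2 → J y = J y') (hf : IsBddLip f) :
    IsBddLip (fun y => J y (f (φ y))) ∧ lipNorm (fun y => J y (f (φ y))) ≤ lipNorm f := by
  have hbd : ∀ y, ‖J y (f (φ y))‖ ≤ lipNorm f := fun y =>
    ((J y).norm_map _).trans_le (hf.norm_le_lipNorm _)
  have hlip := norm_twistedComp_sub_le hφ hJ hf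
  exact ⟨⟨⟨_, hlip⟩, _, hbd⟩, lipNorm_le (lipNorm_nonneg f) hlip hbd⟩

end TwistedComp

lemma SameTwoComponent.of_dist_lt_two {Y : Type*} [MetricSpace Y] {y y' : Y}
    (h : dist y y' < 2) : SameTwoComponent y y' :=
  Relation.ReflTransGen.single h

theorem IsStandardLipIso.isLipIso {𝕜 X Y E F : Type*} [RCLike 𝕜] [MetricSpace X]
    [MetricSpace Y] [NormedAddCommGroup E] [NormedSpace 𝕜 E] [NormedAddCommGroup F]
    [NormedSpace 𝕜 F] {T : (X → E) → (Y → F)} (hT : IsStandardLipIso 𝕜 T) : IsLipIso 𝕜 T := by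
  obtain ⟨φ, ψ, J, hli, hri, hφ, hψ, hJ, hT⟩ := hT
  have hJloc : ∀ y y', dist y y' < 2 → (J y).toLinearIsometry = (J y').toLinearIsometry :=
    fun y y' h => by rw [hJ y y' (.of_dist_lt_two h)]
  have hJinv : ∀ x x', dist x x' < 2 →
      (J (ψ x)).symm.toLinearIsometry = (J (ψ x')).symm.toLinearIsometry := fun x x' h => by
    rw [hJ (ψ x) (ψ x') (.of_dist_lt_two (by rwa [hψ x x' h]))]
  have forward (f : X → E) (hf : IsBddLip f) : IsBddLip (T f) ∧ lipNorm (T f) ≤ lipNorm f := by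
    rw [funext (hT f hf)]
    exact isBddLip_twistedComp_and_lipNorm_le hφ hJloc hf
  have backward (g : Y → F) (hg : IsBddLip g) :
      IsBddLip (fun x => (J (ψ x)).symm (g (ψ x))) ∧
        lipNorm (fun x => (J (ψ x)).symm (g (ψ x))) ≤ lipNorm g :=
    isBddLip_twistedComp_and_lipNorm_le hψ hJinv hg
  refine ⟨fun f hf => (forward f hf).1, fun f g hf hg => ?_, fun c f hf => ?_,
    fun f hf => (forward f hf).2.antisymm ?_, fun g hg => ⟨_, (backward g hg).1, ?_⟩⟩
  · ext y
    simp [hT _ (hf.add hg), hT f hf, hT g hg]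
  · ext y
    simp [hT _ (hf.smul c), hT f hf]
  · have hinv : (fun x => (J (ψ x)).symm (T f (ψ x))) = f := by
      ext x
      rw [hT f hf, hri x, LinearIsometryEquiv.symm_apply_apply]
    simpa [hinv] using (backward (T f) (forward f hf).1).2
  · ext y
    rw [hT _ (backward g hg).1, hli y, LinearIsometryEquiv.apply_symm_apply]

/-- Every standard isometry is a surjective linear isometry, and its associated map
`J : Y → Iso(E,F)` is Lipschitz for the operator norm. -/
theorem stmt19 {𝕜 X Y E F : Type*} [RCLike 𝕜] [MetricSpace X] [MetricSpace Y]
    [NormedAddCommGroup E] [NormedSpace 𝕜 E] [NormedAddCommGroup F] [NormedSpace 𝕜 F]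
    (T : (X → E) → (Y → F)) (φ : Y → X) (ψ : X → Y) (J : Y → E ≃ₗᵢ[𝕜] F)
    (hli : Function.LeftInverse ψ φ) (hri : Function.RightInverse ψ φ)
    (hφ : PreservesDistLT2 φ) (hψ : PreservesDistLT2 ψ)
    (hJ : ∀ y y' : Y, SameTwoComponent y y' → J y = J y')
    (hT : ∀ f : X → E, IsBddLip f → ∀ y : Y, T f y = J y (f (φ y))) :
    IsLipIso 𝕜 T ∧
    ∃ K : ℝ, ∀ y y' : Y,
      ‖((J y).toContinuousLinearEquiv : E →L[𝕜] F) -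
        ((J y').toContinuousLinearEquiv : E →L[𝕜] F)‖ ≤ K * dist y y' := by
  refine ⟨IsStandardLipIso.isLipIso ⟨φ, ψ, J, hli, hri, hφ, hψ, hJ, hT⟩, 1, fun y y' => ?_⟩
  rw [one_mul]
  exact norm_sub_le_dist_of_eq_of_dist_lt_two
    (fun z => (J z).toLinearIsometry.norm_toContinuousLinearMap_le)
    (fun z z' h => by rw [hJ z z' (.of_dist_lt_two h)]) y y'
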